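/- arXiv:2401.05445 — 2 statements merged into one kernel-verified Lean document; each statement's English description precedes it below -/
import Mathlib

section
/- The limit of τ(γ) = √(1/(2|1+γ|))·B(1/4 + (3-γ)/(4|1+γ|), 1/2) as γ → -1 equals √(π/2). -/
open Real Filter

/-- The complete Beta function `B(a,b) = Γ(a)Γ(b)/Γ(a+b)`. -/
noncomputable def betaFun (a b : ℝ) : ℝ :=
  Real.Gamma a * Real.Gamma b / Real.Gamma (a + b)

/-- The dimensionless collapse time `τ(γ) = √(η/2)·B(α,1/2)`. -/
noncomputable def tau (γ : ℝ) : ℝ :=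
  Real.sqrt ((1 / |1 + γ|) / 2) *
    betaFun (1 / 4 + (3 - γ) / (4 * |1 + γ|)) (1 / 2)

/-!
Write `ε = |1 + γ|` and `α = 1/4 + (3 - γ)/(4ε)`. Then `εα = (ε + 3 - γ)/4 → 1`, so `α → ∞`
as `γ → -1`, and `B(α, 1/2) = √π Γ(α)/Γ(α + 1/2)` gives
`τ(γ) = √π / (√(2εα) · Γ(α + 1/2)/(√α Γ(α)))`.
By Wendel's limit `Γ(x + s)/(x^s Γ(x)) → 1` (`x → ∞`, `0 < s < 1`), which follows from the
log-convexity of `Γ`, the last factor tends to `1`, hence `τ(γ) → √π/√2`.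
-/

open Topology

namespace Real

lemma rpow_Gamma_mul_rpow_Gamma_add_one {y a b : ℝ} (hy : 0 < y) (hab : a + b = 1) :
    Gamma y ^ a * Gamma (y + 1) ^ b = y ^ b * Gamma y := by
  have hΓ : 0 < Gamma y := Gamma_pos_of_pos hy
  rw [Gamma_add_one hy.ne', mul_rpow hy.le hΓ.le, mul_left_comm, ← rpow_add hΓ, hab, rpow_one]

variable {x s : ℝ}

lemma Gamma_add_le_rpow_mul_Gamma (hx : 0 < x) (hs₀ : 0 < s) (hs₁ : s < 1) :
    Gamma (x + s) ≤ x ^ s * Gamma x := by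
  calc Gamma (x + s) = Gamma ((1 - s) * x + s * (x + 1)) := by ring_nf
    _ ≤ Gamma x ^ (1 - s) * Gamma (x + 1) ^ s :=
      Gamma_mul_add_mul_le_rpow_Gamma_mul_rpow_Gamma hx (by linarith) (by linarith) hs₀ (by ring)
    _ = x ^ s * Gamma x := rpow_Gamma_mul_rpow_Gamma_add_one hx (by ring)

lemma mul_Gamma_le_rpow_mul_Gamma_add (hx : 0 < x) (hs₀ : 0 < s) (hs₁ : s < 1) :
    x * Gamma x ≤ (x + s) ^ (1 - s) * Gamma (x + s) := by
  have hxs : 0 < x + s := by linarith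
  calc x * Gamma x = Gamma (s * (x + s) + (1 - s) * (x + s + 1)) := by
        rw [← Gamma_add_one hx.ne']; ring_nf
    _ ≤ Gamma (x + s) ^ s * Gamma (x + s + 1) ^ (1 - s) :=
      Gamma_mul_add_mul_le_rpow_Gamma_mul_rpow_Gamma hxs (by linarith) hs₀ (by linarith) (by ring)
    _ = (x + s) ^ (1 - s) * Gamma (x + s) := rpow_Gamma_mul_rpow_Gamma_add_one hxs (by ring)

theorem tendsto_Gamma_add_div_rpow_mul_Gamma (hs₀ : 0 < s) (hs₁ : s < 1) :
    Tendsto (fun x => Gamma (x + s) / (x ^ s * Gamma x)) atTop (𝓝 1) := by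
  have hlow : Tendsto (fun x => (x / (x + s)) ^ (1 - s)) atTop (𝓝 1) := by
    have h : Tendsto (fun x => 1 - s / (x + s)) atTop (𝓝 1) := by
      simpa using tendsto_const_nhds.sub
        (tendsto_const_nhds.div_atTop (tendsto_atTop_add_const_right _ s tendsto_id))
    simpa using (h.rpow_const (Or.inl one_ne_zero)).congr' (by
      filter_upwards [eventually_gt_atTop 0] with x hx
      rw [one_sub_div (by linarith), add_sub_cancel_right])
  refine tendsto_of_tendsto_of_tendsto_of_le_of_le' hlow tendsto_const_nhds ?_ ?_
  · filter_upwards [eventually_gt_atTop 0] with x hx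
    have hxs : 0 < x + s := by linarith
    have hΓ : 0 < Gamma x := Gamma_pos_of_pos hx
    rw [div_rpow hx.le hxs.le, div_le_div_iff₀ (by positivity) (by positivity)]
    calc x ^ (1 - s) * (x ^ s * Gamma x) = x * Gamma x := by
          rw [← mul_assoc, ← rpow_add hx, sub_add_cancel, rpow_one]
      _ ≤ (x + s) ^ (1 - s) * Gamma (x + s) := mul_Gamma_le_rpow_mul_Gamma_add hx hs₀ hs₁
      _ = Gamma (x + s) * (x + s) ^ (1 - s) := mul_comm _ _
  · filter_upwards [eventually_gt_atTop 0] with x hx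
    rw [div_le_one (by have := Gamma_pos_of_pos hx; positivity)]
    exact Gamma_add_le_rpow_mul_Gamma hx hs₀ hs₁

end Real

lemma abs_one_add_pos {γ : ℝ} (hγ : γ ≠ -1) : 0 < |1 + γ| :=
  abs_pos.2 fun h => hγ (by linarith)

noncomputable def tauAlpha (γ : ℝ) : ℝ := 1 / 4 + (3 - γ) / (4 * |1 + γ|)

lemma abs_one_add_mul_tauAlpha {γ : ℝ} (hγ : γ ≠ -1) :
    |1 + γ| * tauAlpha γ = (|1 + γ| + 3 - γ) / 4 := by
  have := (abs_one_add_pos hγ).ne'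
  rw [tauAlpha]
  field_simp
  ring

lemma tendsto_abs_one_add_mul_tauAlpha :
    Tendsto (fun γ => |1 + γ| * tauAlpha γ) (𝓝[≠] (-1)) (𝓝 1) := by
  have hc : Tendsto (fun γ : ℝ => (|1 + γ| + 3 - γ) / 4) (𝓝 (-1)) (𝓝 1) := by
    have := (show Continuous fun γ : ℝ => (|1 + γ| + 3 - γ) / 4 by fun_prop).tendsto (-1)
    norm_num at this
    exact this
  exact (hc.mono_left nhdsWithin_le_nhds).congr' (eventually_nhdsWithin_of_forall
    fun γ hγ => (abs_one_add_mul_tauAlpha hγ).symm)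

lemma tendsto_abs_one_add_nhdsGT_zero :
    Tendsto (fun γ : ℝ => |1 + γ|) (𝓝[≠] (-1)) (𝓝[>] 0) := by
  refine tendsto_nhdsWithin_of_tendsto_nhds_of_eventually_within _ ?_
    (eventually_nhdsWithin_of_forall fun γ hγ => abs_one_add_pos hγ)
  have := (show Continuous fun γ : ℝ => |1 + γ| by fun_prop).tendsto (-1)
  norm_num at this
  exact this.mono_left nhdsWithin_le_nhds

lemma tendsto_tauAlpha_atTop : Tendsto tauAlpha (𝓝[≠] (-1)) atTop := by
  refine (tendsto_abs_one_add_mul_tauAlpha.pos_mul_atTop one_pos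
    (tendsto_inv_nhdsGT_zero.comp tendsto_abs_one_add_nhdsGT_zero)).congr'
    (eventually_nhdsWithin_of_forall fun γ hγ => ?_)
  have := (abs_one_add_pos hγ).ne'
  simp only [Function.comp_apply]
  field_simp

lemma betaFun_one_half (a : ℝ) : betaFun a (1 / 2) = √π * Gamma a / Gamma (a + 1 / 2) := by
  rw [betaFun, Gamma_one_half_eq]
  ring

lemma tau_eq {γ : ℝ} (hγ : γ ≠ -1) :
    tau γ = √π / (√(2 * (|1 + γ| * tauAlpha γ)) *
      (Gamma (tauAlpha γ + 1 / 2) / (tauAlpha γ ^ (1 / 2 : ℝ) * Gamma (tauAlpha γ)))) := by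
  have he : 0 < |1 + γ| := abs_one_add_pos hγ
  have ha : 0 < tauAlpha γ := by
    refine pos_of_mul_pos_right ?_ he.le
    rw [abs_one_add_mul_tauAlpha hγ]
    linarith [le_abs_self (1 + γ)]
  have hΓ : 0 < Gamma (tauAlpha γ) := Gamma_pos_of_pos ha
  have hΓ' : 0 < Gamma (tauAlpha γ + 1 / 2) := Gamma_pos_of_pos (by linarith)
  rw [tau, ← tauAlpha, betaFun_one_half, ← sqrt_eq_rpow, ← mul_assoc, mul_comm 2,
    sqrt_mul' _ ha.le, div_div, one_div, sqrt_inv]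
  have hsqrt_two_abs : 0 < √(|1 + γ| * 2) := by positivity
  have hsqrt_alpha : 0 < √(tauAlpha γ) := by positivity
  field_simp

theorem collapse_time_removable_singularity :
    Tendsto tau (nhdsWithin (-1) {(-1 : ℝ)}ᶜ) (nhds (Real.sqrt (π / 2))) := by
  have hW := (tendsto_Gamma_add_div_rpow_mul_Gamma (s := 1 / 2) (by norm_num) (by norm_num)).comp
    tendsto_tauAlpha_atTop
  have hS := (tendsto_abs_one_add_mul_tauAlpha.const_mul 2).sqrt
  have hlim := tendsto_const_nhds (x := √π) |>.div (hS.mul hW) (by norm_num)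
  rw [mul_one, mul_one, ← sqrt_div' _ zero_le_two] at hlim
  exact hlim.congr' (eventually_nhdsWithin_of_forall fun γ hγ => (tau_eq hγ).symm)
end

section
/- For all real γ ≠ -1, the collapse times satisfy the symmetry τ(γ)·τ(-2-γ) = π/2, where τ(γ) = √(1/(2|1+γ|))·B(1/4 + (3-γ)/(4|1+γ|), 1/2). -/
open Real

/-! With `s = 1 + γ > 0` (the case `s < 0` is the same after swapping the factors), the first
Beta argument of `τ(γ)` is `a = 1/s` and that of `τ(-2-γ)` is `a + 1/2`. Telescoping the Gamma
quotients, `B(a, b)·B(a + b, 1 - b) = Γ(b)Γ(1 - b)·Γ(a)/Γ(a + 1) = π / (a sin πb)` by Euler's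
reflection formula, so at `b = 1/2` the product of collapse times is `(1/(2s))·(π s) = π/2`. -/

theorem betaFun_mul_betaFun_add {a b : ℝ} (ha : 0 < a) (hb : 0 < b) :
    betaFun a b * betaFun (a + b) (1 - b) = π / (a * sin (π * b)) := by
  have hΓa : Gamma a ≠ 0 := (Gamma_pos_of_pos ha).ne'
  have hΓab : Gamma (a + b) ≠ 0 := (Gamma_pos_of_pos (by linarith)).ne'
  have hreflect : Gamma b * Gamma (1 - b) = π / sin (π * b) := Gamma_mul_Gamma_one_sub b
  unfold betaFun
  rw [show a + b + (1 - b) = a + 1 by ring, Gamma_add_one ha.ne']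
  calc Gamma a * Gamma b / Gamma (a + b) * (Gamma (a + b) * Gamma (1 - b) / (a * Gamma a))
      = Gamma b * Gamma (1 - b) / a := by field_simp
    _ = π / (a * sin (π * b)) := by rw [hreflect, div_div, mul_comm a]

theorem betaFun_half_mul_betaFun_add_half {a : ℝ} (ha : 0 < a) :
    betaFun a (1 / 2) * betaFun (a + 1 / 2) (1 / 2) = π / a := by
  have h := betaFun_mul_betaFun_add ha (b := 1 / 2) (by norm_num)
  rwa [show (1 : ℝ) - 1 / 2 = 1 / 2 by norm_num, show π * (1 / 2) = π / 2 by ring,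
    sin_pi_div_two, mul_one] at h

theorem tau_sub_one {s : ℝ} (hs : 0 < s) :
    tau (s - 1) = sqrt (1 / s / 2) * betaFun (1 / s) (1 / 2) := by
  have habs : |1 + (s - 1)| = s := by rw [add_sub_cancel, abs_of_pos hs]
  rw [tau, habs]
  congr 2
  field_simp
  ring

theorem tau_neg_one_sub {s : ℝ} (hs : 0 < s) :
    tau (-1 - s) = sqrt (1 / s / 2) * betaFun (1 / s + 1 / 2) (1 / 2) := by
  have habs : |1 + (-1 - s)| = s := by rw [show 1 + (-1 - s) = -s by ring, abs_neg, abs_of_pos hs]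
  rw [tau, habs]
  congr 2
  field_simp
  ring

theorem tau_sub_one_mul_tau_neg_one_sub {s : ℝ} (hs : 0 < s) :
    tau (s - 1) * tau (-1 - s) = π / 2 := by
  have hsqrt : sqrt (1 / s / 2) * sqrt (1 / s / 2) = 1 / s / 2 :=
    mul_self_sqrt (by positivity)
  rw [tau_sub_one hs, tau_neg_one_sub hs]
  calc sqrt (1 / s / 2) * betaFun (1 / s) (1 / 2) *
        (sqrt (1 / s / 2) * betaFun (1 / s + 1 / 2) (1 / 2))
      = (sqrt (1 / s / 2) * sqrt (1 / s / 2)) *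
        (betaFun (1 / s) (1 / 2) * betaFun (1 / s + 1 / 2) (1 / 2)) := by ring
    _ = 1 / s / 2 * (π / (1 / s)) := by
      rw [hsqrt, betaFun_half_mul_betaFun_add_half (by positivity)]
    _ = π / 2 := by field_simp

theorem collapse_time_symmetry (γ : ℝ) (hγ : γ ≠ -1) :
    tau γ * tau (-2 - γ) = π / 2 := by
  rcases hγ.lt_or_gt with hlt | hgt
  · have h := tau_sub_one_mul_tau_neg_one_sub (s := -(1 + γ)) (by linarith)
    rw [mul_comm, ← h]
    congr 2 <;> ring
  · have h := tau_sub_one_mul_tau_neg_one_sub (s := 1 + γ) (by linarith)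
    rw [← h]
    congr 2 <;> ring
end
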